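/- For a uniformly random function f: {0,1}^n → {0,1} and the full phase state |ψ_f⟩ = 2^{−n/2} Σ_{x∈{0,1}^n} (−1)^{f(x)}|x⟩, the expected linearized 2-stabilizer purity satisfies E_f[2^{−M₂(ψ_f)}] = E_f[ 2^{−n} Σ_{P∈𝔓_n} tr⁴(P ψ_f) ] ≤ 20/2^n. -/

import Mathlib

open scoped BigOperators
open ComplexConjugate
open scoped ComplexOrder

noncomputable def traceNorm {ι : Type*} [Fintype ι] [DecidableEq ι] (A : Matrix ι ι ℂ) : ℝ :=
  (((Matrix.posSemidef_conjTranspose_mul_self A).1.eigenvectorUnitary : Matrix ι ι ℂ) *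
      Matrix.diagonal ((fun r : ℝ => (r : ℂ)) ∘ Real.sqrt ∘ (Matrix.posSemidef_conjTranspose_mul_self A).1.eigenvalues) *
      (star (Matrix.posSemidef_conjTranspose_mul_self A).1.eigenvectorUnitary : Matrix ι ι ℂ)).trace.re

noncomputable def proj {ι : Type*} (v : ι → ℂ) : Matrix ι ι ℂ :=
  Matrix.of fun i j => v i * conj (v j)

noncomputable def tensorPow {ι : Type*} (A : Matrix ι ι ℂ) (t : ℕ) :
    Matrix (Fin t → ι) (Fin t → ι) ℂ :=
  Matrix.of fun x y => ∏ i, A (x i) (y i)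

noncomputable def pauli {n : ℕ} (a b : Fin n → ZMod 2) :
    Matrix (Fin n → ZMod 2) (Fin n → ZMod 2) ℂ :=
  Matrix.of fun x y =>
    if x = y + a then
      Complex.I ^ (∑ i, (a i * b i).val) * (-1 : ℂ) ^ (∑ i, (b i * y i).val)
    else 0

noncomputable def xi {n : ℕ} (ρ : Matrix (Fin n → ZMod 2) (Fin n → ZMod 2) ℂ)
    (p : (Fin n → ZMod 2) × (Fin n → ZMod 2)) : ℝ :=
  Complex.normSq ((pauli p.1 p.2 * ρ).trace) / 2 ^ n

/-- The full phase state |ψ_f⟩ = 2^{−n/2} Σ_x (−1)^{f(x)} |x⟩. -/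
noncomputable def phaseState {n : ℕ} (f : (Fin n → ZMod 2) → ZMod 2) :
    (Fin n → ZMod 2) → ℂ :=
  fun x => (-1 : ℂ) ^ (f x).val / (Real.sqrt ((2 : ℝ) ^ n) : ℂ)

/-- The 2-stabilizer entropy M₂(ψ) = −log₂(2^{−n} Σ_P tr⁴(Pψ)). -/
noncomputable def M2 {n : ℕ} (ρ : Matrix (Fin n → ZMod 2) (Fin n → ZMod 2) ℂ) : ℝ :=
  - Real.logb 2 (((2 : ℝ) ^ n)⁻¹ *
    ∑ p : (Fin n → ZMod 2) × (Fin n → ZMod 2), (((pauli p.1 p.2 * ρ).trace).re) ^ 4)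

/-! Writing `tr(P_{a,b} ψ_f) = i^{a·b} S_f(a, b) / 2^n` with
`S_f(a, b) = Σ_y (-1)^{b·y + f(y) + f(y + a)}` (`autocorr (b ⬝ᵥ ·) f a` below), the Paulis
with `a = 0` contribute exactly `1` (orthogonality of the characters `y ↦ (-1)^{b·y}`).
For `a ≠ 0`, expanding `S_f(a, b)^4` gives a sum over quadruples `(y₁, y₂, y₃, y₄)`; if some
point occurs an odd number of times among the `y_i, y_i + a`, flipping `f` at that point flips
the sign of the term, so the average over `f` vanishes. The surviving quadruples have their pairs
`{y_i, y_i + a}` matched in two couples, and there are at most `3 (2 · 2^n)^2` of them. Hence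
`E_f[S_f(a, b)^4] ≤ 12 · 4^n`, and the expected purity is at most `(1 + 12) / 2^n`. -/

open Finset

section SignCharacter

def signChar (x : ZMod 2) : ℝ := (-1) ^ x.val

lemma signChar_natCast (k : ℕ) : signChar k = (-1) ^ k := by
  rw [signChar, ZMod.val_natCast, ← neg_one_pow_eq_pow_mod_two]

lemma signChar_add (x y : ZMod 2) : signChar (x + y) = signChar x * signChar y := by
  rw [signChar, ZMod.val_add, ← neg_one_pow_eq_pow_mod_two, pow_add, signChar, signChar]

@[simp] lemma signChar_zero : signChar 0 = 1 := by simp [signChar]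

@[simp] lemma signChar_one : signChar 1 = -1 := by simpa using signChar_natCast 1

lemma abs_signChar (x : ZMod 2) : |signChar x| = 1 := by simp [signChar]

lemma signChar_sum {ι : Type*} (s : Finset ι) (h : ι → ZMod 2) :
    signChar (∑ i ∈ s, h i) = ∏ i ∈ s, signChar (h i) := by
  classical
  induction s using Finset.induction_on with
  | empty => simp
  | insert i s hi ih => rw [sum_insert hi, prod_insert hi, signChar_add, ih]

lemma neg_one_pow_sum_val {ι : Type*} (s : Finset ι) (h : ι → ZMod 2) :
    (-1 : ℝ) ^ (∑ i ∈ s, (h i).val) = signChar (∑ i ∈ s, h i) := by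
  rw [signChar_sum, ← prod_pow_eq_pow_sum]
  rfl

lemma Fintype.sum_eq_zero_of_add_eq_neg {G : Type*} [AddGroup G] [Fintype G] (F : G → ℝ) (h : G)
    (hF : ∀ x, F (x + h) = -F x) : ∑ x, F x = 0 := by
  have := Equiv.sum_comp (Equiv.addRight h) F
  simp only [Equiv.coe_addRight, hF, sum_neg_distrib] at this
  linarith

lemma sum_signChar_dotProduct {ι : Type*} [Fintype ι] [DecidableEq ι] (b : ι → ZMod 2) :
    ∑ y, signChar (b ⬝ᵥ y) = if b = 0 then (Fintype.card (ι → ZMod 2) : ℝ) else 0 := by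
  split_ifs with hb
  · simp [hb]
  obtain ⟨i, hi⟩ := Function.ne_iff.mp hb
  have hbi : b i = 1 := (by decide : ∀ c : ZMod 2, c ≠ 0 → c = 1) _ hi
  refine Fintype.sum_eq_zero_of_add_eq_neg _ (Pi.single i 1) fun y => ?_
  rw [dotProduct_add, dotProduct_single, hbi, mul_one, signChar_add, signChar_one, mul_neg_one]

end SignCharacter

section Pairings

def PairsUp {Q : Type*} (q : Fin 4 → Q) : Prop :=
  (q 0 = q 1 ∧ q 2 = q 3) ∨ (q 0 = q 2 ∧ q 1 = q 3) ∨ (q 0 = q 3 ∧ q 1 = q 2)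

instance {Q : Type*} [DecidableEq Q] (q : Fin 4 → Q) : Decidable (PairsUp q) := by
  unfold PairsUp
  infer_instance

lemma pairsUp_of_even_card {Q : Type*} [DecidableEq Q] (q : Fin 4 → Q)
    (h : ∀ j, Even #{i | q i = q j}) : PairsUp q := by
  have h0 := h 0
  have h1 := h 1
  have h2 := h 2
  simp only [card_filter, Fin.sum_univ_four] at h0 h1 h2
  unfold PairsUp
  grind

variable {V Q : Type*} [Fintype V] [DecidableEq Q] (π : V → Q)

lemma card_fiberPairs_le (m : ℕ) (hπ : ∀ u, #{v | π v = π u} ≤ m) :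
    #{uv : V × V | π uv.1 = π uv.2} ≤ m * Fintype.card V := by
  calc #{uv : V × V | π uv.1 = π uv.2} = ∑ u, #{v | π v = π u} := by
        simp only [card_filter, Fintype.sum_prod_type, eq_comm]
    _ ≤ ∑ _u : V, m := sum_le_sum fun u _ => hπ u
    _ = m * Fintype.card V := by rw [sum_const, card_univ, smul_eq_mul, mul_comm]

lemma card_twoFiberPairs_le {i j k l : Fin 4} (hcover : ∀ r, r = i ∨ r = j ∨ r = k ∨ r = l) :
    #{p : Fin 4 → V | π (p i) = π (p j) ∧ π (p k) = π (p l)}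
      ≤ #{uv : V × V | π uv.1 = π uv.2} ^ 2 := by
  rw [sq, ← card_product]
  refine card_le_card_of_injOn (fun p => ((p i, p j), (p k, p l))) (fun p hp => by simpa using hp)
    fun p _ p' _ hpp' => ?_
  simp only [Prod.mk.injEq] at hpp'
  funext r
  rcases hcover r with rfl | rfl | rfl | rfl <;> tauto

lemma card_pairsUp_le [DecidableEq V] (m : ℕ) (hπ : ∀ u, #{v | π v = π u} ≤ m) :
    #{p : Fin 4 → V | PairsUp (π ∘ p)} ≤ 3 * (m * Fintype.card V) ^ 2 := by
  have hcouple : ∀ {i j k l : Fin 4}, (∀ r, r = i ∨ r = j ∨ r = k ∨ r = l) →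
      #{p : Fin 4 → V | π (p i) = π (p j) ∧ π (p k) = π (p l)} ≤ (m * Fintype.card V) ^ 2 :=
    fun h => (card_twoFiberPairs_le π h).trans (by gcongr; exact card_fiberPairs_le π m hπ)
  simp only [PairsUp, Function.comp_apply, filter_or]
  grw [card_union_le, card_union_le, hcouple (by decide), hcouple (by decide),
    hcouple (by decide)]
  omega

end Pairings

section Autocorrelation

variable {V : Type*} [AddCommGroup V] {a : V}

lemma single_add_single_add_eq_ite [DecidableEq V] (ha : a ≠ 0) (haa : a + a = 0) (y z : V) :
    (Pi.single z 1 : V → ZMod 2) y + (Pi.single z 1 : V → ZMod 2) (y + a)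
      = if s(y, y + a) = s(z, z + a) then 1 else 0 := by
  have hya : y + a ≠ y := by simpa using ha
  by_cases hy : y = z
  · subst hy
    simp [hya]
  by_cases hy' : y + a = z
  · subst hy'
    simp [hy, add_assoc, haa, Sym2.eq_swap]
  · simp [hy, hy']

lemma card_filter_sym2_add_eq_le [Fintype V] [DecidableEq V] (u : V) :
    #{v | s(v, v + a) = s(u, u + a)} ≤ 2 := by
  refine (card_le_card (t := {u, u + a}) fun v hv => ?_).trans card_le_two
  simp only [mem_filter, mem_univ, true_and, Sym2.eq_iff] at hv
  rcases hv with ⟨rfl, -⟩ | ⟨rfl, -⟩ <;> simp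

variable [Fintype V]

def autocorr (β f : V → ZMod 2) (a : V) : ℝ := ∑ y, signChar (β y + f y + f (y + a))

lemma autocorr_zero (β f : V → ZMod 2) : autocorr β f 0 = ∑ y, signChar (β y) := by
  simp only [autocorr, add_zero, add_assoc, CharTwo.add_self_eq_zero]

variable [DecidableEq V]

lemma sum_prod_signChar_eq_zero_of_odd (ha : a ≠ 0) (haa : a + a = 0) (β : V → ZMod 2)
    {ι : Type*} [Fintype ι] (y : ι → V) (z : V)
    (hz : Odd #{i | s(y i, y i + a) = s(z, z + a)}) :
    ∑ f : V → ZMod 2, ∏ i, signChar (β (y i) + f (y i) + f (y i + a)) = 0 := by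
  refine Fintype.sum_eq_zero_of_add_eq_neg _ (Pi.single z 1) fun f => ?_
  have hflip : ∏ i, signChar ((Pi.single z 1 : V → ZMod 2) (y i)
      + (Pi.single z 1 : V → ZMod 2) (y i + a)) = -1 := by
    simp only [single_add_single_add_eq_ite ha haa, ← signChar_sum, sum_boole, signChar_natCast,
      hz.neg_one_pow]
  rw [← mul_neg_one, ← hflip, ← prod_mul_distrib]
  refine prod_congr rfl fun i _ => ?_
  rw [← signChar_add, Pi.add_apply, Pi.add_apply]
  abel_nf

lemma sum_prod_signChar_le (ha : a ≠ 0) (haa : a + a = 0) (β : V → ZMod 2) (y : Fin 4 → V) :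
    ∑ f : V → ZMod 2, ∏ i, signChar (β (y i) + f (y i) + f (y i + a))
      ≤ Fintype.card (V → ZMod 2) * if PairsUp ((fun v => s(v, v + a)) ∘ y) then 1 else 0 := by
  split_ifs with hp
  · rw [mul_one, ← nsmul_one, ← card_univ, ← sum_const]
    refine sum_le_sum fun f _ => (le_abs_self _).trans ?_
    simp [abs_prod, abs_signChar]
  · obtain ⟨j, hj⟩ : ∃ j, ¬Even #{i | s(y i, y i + a) = s(y j, y j + a)} := by
      by_contra! h
      exact hp (pairsUp_of_even_card _ h)
    rw [mul_zero, sum_prod_signChar_eq_zero_of_odd ha haa β y (y j) (Nat.not_even_iff_odd.mp hj)]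

theorem sum_autocorr_pow_four_le (ha : a ≠ 0) (haa : a + a = 0) (β : V → ZMod 2) :
    ∑ f : V → ZMod 2, autocorr β f a ^ 4
      ≤ 12 * Fintype.card (V → ZMod 2) * Fintype.card V ^ 2 := by
  calc ∑ f : V → ZMod 2, autocorr β f a ^ 4
      = ∑ p : Fin 4 → V, ∑ f : V → ZMod 2, ∏ i, signChar (β (p i) + f (p i) + f (p i + a)) := by
        simp only [autocorr, Fintype.sum_pow]
        exact sum_comm
    _ ≤ ∑ p : Fin 4 → V, Fintype.card (V → ZMod 2) *
          if PairsUp ((fun v => s(v, v + a)) ∘ p) then (1 : ℝ) else 0 :=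
        sum_le_sum fun p _ => sum_prod_signChar_le ha haa β p
    _ = Fintype.card (V → ZMod 2) * #{p : Fin 4 → V | PairsUp ((fun v => s(v, v + a)) ∘ p)} := by
        rw [← mul_sum, sum_boole]
    _ ≤ Fintype.card (V → ZMod 2) * (3 * (2 * Fintype.card V) ^ 2 : ℕ) := by
        gcongr
        exact card_pairsUp_le _ 2 card_filter_sym2_add_eq_le
    _ = 12 * Fintype.card (V → ZMod 2) * Fintype.card V ^ 2 := by
        push_cast
        ring

end Autocorrelation

section PhaseStates

variable {n : ℕ}

lemma card_pi_zmod_two : (Fintype.card (Fin n → ZMod 2) : ℝ) = 2 ^ n := by simp [ZMod.card]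

lemma phaseState_eq_ofReal (f : (Fin n → ZMod 2) → ZMod 2) (x : Fin n → ZMod 2) :
    phaseState f x = ((signChar (f x) / √(2 ^ n) : ℝ) : ℂ) := by
  simp [phaseState, signChar]

lemma phaseState_mul_conj (f : (Fin n → ZMod 2) → ZMod 2) (x y : Fin n → ZMod 2) :
    phaseState f x * conj (phaseState f y) = ((signChar (f x + f y) / 2 ^ n : ℝ) : ℂ) := by
  rw [phaseState_eq_ofReal, phaseState_eq_ofReal, Complex.conj_ofReal, ← Complex.ofReal_mul,
    div_mul_div_comm, Real.mul_self_sqrt (by positivity), signChar_add]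

lemma trace_pauli_mul_proj_phaseState (f : (Fin n → ZMod 2) → ZMod 2) (a b : Fin n → ZMod 2) :
    (pauli a b * proj (phaseState f)).trace
      = Complex.I ^ (∑ i, (a i * b i).val) * ((autocorr (b ⬝ᵥ ·) f a / 2 ^ n : ℝ) : ℂ) := by
  simp only [Matrix.trace, Matrix.diag, Matrix.mul_apply, pauli, proj, Matrix.of_apply]
  rw [sum_comm]
  simp only [ite_mul, zero_mul, sum_ite_eq', mem_univ, if_true, mul_assoc, phaseState_mul_conj,
    autocorr]
  rw [← mul_sum, sum_div, Complex.ofReal_sum]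
  congr 1
  refine sum_congr rfl fun y _ => ?_
  rw [add_assoc, signChar_add (b ⬝ᵥ y), mul_div_assoc, Complex.ofReal_mul, dotProduct,
    ← neg_one_pow_sum_val]
  push_cast
  rfl

lemma re_trace_pauli_mul_proj_phaseState_pow_four_le (f : (Fin n → ZMod 2) → ZMod 2)
    (a b : Fin n → ZMod 2) :
    ((pauli a b * proj (phaseState f)).trace.re) ^ 4 ≤ (autocorr (b ⬝ᵥ ·) f a / 2 ^ n) ^ 4 := by
  have h4 : Even 4 := by decide
  calc ((pauli a b * proj (phaseState f)).trace.re) ^ 4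
      = |(pauli a b * proj (phaseState f)).trace.re| ^ 4 := (h4.pow_abs _).symm
    _ ≤ ‖(pauli a b * proj (phaseState f)).trace‖ ^ 4 := by
        gcongr
        exact Complex.abs_re_le_norm _
    _ = (autocorr (b ⬝ᵥ ·) f a / 2 ^ n) ^ 4 := by
        rw [trace_pauli_mul_proj_phaseState, norm_mul, norm_pow, Complex.norm_I, one_pow, one_mul,
          Complex.norm_real, Real.norm_eq_abs, h4.pow_abs]

lemma re_trace_pauli_zero_mul_proj_phaseState (f : (Fin n → ZMod 2) → ZMod 2) :
    (pauli (0 : Fin n → ZMod 2) 0 * proj (phaseState f)).trace.re = 1 := by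
  rw [trace_pauli_mul_proj_phaseState, autocorr_zero]
  simp

lemma one_le_sum_re_trace_pauli_mul_proj_phaseState_pow_four (f : (Fin n → ZMod 2) → ZMod 2) :
    1 ≤ ∑ p : (Fin n → ZMod 2) × (Fin n → ZMod 2),
      ((pauli p.1 p.2 * proj (phaseState f)).trace.re) ^ 4 := by
  refine le_of_eq_of_le ?_ (single_le_sum (fun p _ => by positivity) (mem_univ 0))
  simp only [Prod.fst_zero, Prod.snd_zero, re_trace_pauli_zero_mul_proj_phaseState, one_pow]

lemma sum_re_trace_pauli_mul_proj_phaseState_pow_four_le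
    (p : (Fin n → ZMod 2) × (Fin n → ZMod 2)) :
    ∑ f : (Fin n → ZMod 2) → ZMod 2, ((pauli p.1 p.2 * proj (phaseState f)).trace.re) ^ 4
      ≤ Fintype.card ((Fin n → ZMod 2) → ZMod 2) * ((if p = 0 then 1 else 0) + 12 / 4 ^ n) := by
  obtain ⟨a, b⟩ := p
  refine (sum_le_sum fun f _ => re_trace_pauli_mul_proj_phaseState_pow_four_le f a b).trans ?_
  set C : ℝ := (Fintype.card ((Fin n → ZMod 2) → ZMod 2) : ℝ)
  by_cases ha : a = 0
  · subst ha
    have hS : ∀ f : (Fin n → ZMod 2) → ZMod 2,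
        (autocorr (b ⬝ᵥ ·) f 0 / 2 ^ n) ^ 4 = if b = 0 then 1 else 0 := fun f => by
      rw [autocorr_zero, sum_signChar_dotProduct, card_pi_zmod_two]
      split_ifs <;> simp
    simp only [hS, sum_const, card_univ, nsmul_eq_mul, Prod.mk_eq_zero, true_and]
    gcongr
    exact le_add_of_nonneg_right (by positivity)
  calc ∑ f : (Fin n → ZMod 2) → ZMod 2, (autocorr (b ⬝ᵥ ·) f a / 2 ^ n) ^ 4
      = (∑ f : (Fin n → ZMod 2) → ZMod 2, autocorr (b ⬝ᵥ ·) f a ^ 4) / (2 ^ n) ^ 4 := by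
        simp only [div_pow, sum_div]
    _ ≤ 12 * C * (2 ^ n) ^ 2 / (2 ^ n) ^ 4 := by
        rw [← card_pi_zmod_two]
        gcongr
        exact sum_autocorr_pow_four_le ha (ZModModule.add_self a) _
    _ = C * (12 / 4 ^ n) := by
        rw [show (4 : ℝ) ^ n = (2 ^ n) ^ 2 by rw [← pow_mul, mul_comm, pow_mul]; norm_num]
        field_simp
    _ ≤ C * ((if (a, b) = 0 then 1 else 0) + 12 / 4 ^ n) := by
        gcongr
        exact le_add_of_nonneg_left (by positivity)

lemma sum_sum_re_trace_pauli_mul_proj_phaseState_pow_four_le :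
    ∑ p : (Fin n → ZMod 2) × (Fin n → ZMod 2), ∑ f : (Fin n → ZMod 2) → ZMod 2,
        ((pauli p.1 p.2 * proj (phaseState f)).trace.re) ^ 4
      ≤ 13 * Fintype.card ((Fin n → ZMod 2) → ZMod 2) := by
  refine (sum_le_sum fun p _ => sum_re_trace_pauli_mul_proj_phaseState_pow_four_le p).trans_eq ?_
  rw [← mul_sum, sum_add_distrib, sum_ite_eq', if_pos (mem_univ _), sum_const, card_univ,
    Fintype.card_prod, nsmul_eq_mul, Nat.cast_mul, card_pi_zmod_two,
    show (4 : ℝ) ^ n = 2 ^ n * 2 ^ n by rw [← mul_pow]; norm_num]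
  field_simp
  norm_num

end PhaseStates

/-- for a uniformly random function f,
E_f[2^{−M₂(ψ_f)}] = E_f[2^{−n} Σ_P tr⁴(Pψ_f)] ≤ 20/2^n. -/
theorem expected_linearized_M2_le {n : ℕ} :
    (Fintype.card ((Fin n → ZMod 2) → ZMod 2) : ℝ)⁻¹ *
        (∑ f : (Fin n → ZMod 2) → ZMod 2, (2 : ℝ) ^ (-(M2 (proj (phaseState f)))))
      = (Fintype.card ((Fin n → ZMod 2) → ZMod 2) : ℝ)⁻¹ *
        (∑ f : (Fin n → ZMod 2) → ZMod 2, ((2 : ℝ) ^ n)⁻¹ *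
          ∑ p : (Fin n → ZMod 2) × (Fin n → ZMod 2),
            (((pauli p.1 p.2 * proj (phaseState f)).trace).re) ^ 4) ∧
    (Fintype.card ((Fin n → ZMod 2) → ZMod 2) : ℝ)⁻¹ *
        (∑ f : (Fin n → ZMod 2) → ZMod 2, ((2 : ℝ) ^ n)⁻¹ *
          ∑ p : (Fin n → ZMod 2) × (Fin n → ZMod 2),
            (((pauli p.1 p.2 * proj (phaseState f)).trace).re) ^ 4)
      ≤ 20 / 2 ^ n := by
  set C : ℝ := (Fintype.card ((Fin n → ZMod 2) → ZMod 2) : ℝ)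
  have hC : 0 < C := Nat.cast_pos.mpr Fintype.card_pos
  refine ⟨?_, ?_⟩
  · congr 1
    refine sum_congr rfl fun f _ => ?_
    rw [M2, neg_neg]
    exact Real.rpow_logb (by norm_num) (by norm_num) (mul_pos (by positivity)
      (one_pos.trans_le (one_le_sum_re_trace_pauli_mul_proj_phaseState_pow_four f)))
  calc C⁻¹ * ∑ f : (Fin n → ZMod 2) → ZMod 2, ((2 : ℝ) ^ n)⁻¹ *
          ∑ p : (Fin n → ZMod 2) × (Fin n → ZMod 2),
            (((pauli p.1 p.2 * proj (phaseState f)).trace).re) ^ 4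
      = C⁻¹ * ((2 : ℝ) ^ n)⁻¹ * ∑ p : (Fin n → ZMod 2) × (Fin n → ZMod 2),
          ∑ f : (Fin n → ZMod 2) → ZMod 2, (((pauli p.1 p.2 * proj (phaseState f)).trace).re) ^ 4 := by
        rw [← mul_sum, sum_comm, mul_assoc]
    _ ≤ C⁻¹ * ((2 : ℝ) ^ n)⁻¹ * (13 * C) := by
        gcongr
        exact sum_sum_re_trace_pauli_mul_proj_phaseState_pow_four_le
    _ ≤ 20 / 2 ^ n := by
        field_simp
        norm_num
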